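/- arXiv:2601.06269 — 6 statements merged into one kernel-verified Lean document; each statement's English description precedes it below -/
import Mathlib

section
/- Let (X,α,*) be a probabilistic metric space and define φ_{λ,x}(y) = inf{γ ∈ [0,∞) : α(x,y,γ) > 1−λ} (with inf ∅ = ∞). If ε,λ ∈ (0,1] satisfy (1−λ)*(1−λ) > 1−ε, then for all x,y,z ∈ X: φ_{ε,x}(z) ≤ φ_{λ,x}(y) + φ_{λ,y}(z), where addition is in [0,∞]. -/
open scoped ENNReal

noncomputable section

/-- A continuous t-norm `*` on the unit interval `[0,1] ⊆ ℝ`: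
`([0,1], *, 1)` is a commutative monoid, `*` is continuous on `[0,1] × [0,1]`
and monotone in both arguments. -/
structure ContinuousTNorm where
  mul : ℝ → ℝ → ℝ
  mem_mul : ∀ a b, a ∈ Set.Icc (0:ℝ) 1 → b ∈ Set.Icc (0:ℝ) 1 →
    mul a b ∈ Set.Icc (0:ℝ) 1
  mul_comm : ∀ a b, a ∈ Set.Icc (0:ℝ) 1 → b ∈ Set.Icc (0:ℝ) 1 → mul a b = mul b a
  mul_assoc : ∀ a b c, a ∈ Set.Icc (0:ℝ) 1 → b ∈ Set.Icc (0:ℝ) 1 →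
    c ∈ Set.Icc (0:ℝ) 1 → mul (mul a b) c = mul a (mul b c)
  mul_one : ∀ a, a ∈ Set.Icc (0:ℝ) 1 → mul a 1 = a
  continuousOn : ContinuousOn (fun p : ℝ × ℝ => mul p.1 p.2)
    (Set.Icc (0:ℝ) 1 ×ˢ Set.Icc (0:ℝ) 1)
  mul_mono : ∀ a a' b b', a ∈ Set.Icc (0:ℝ) 1 → a' ∈ Set.Icc (0:ℝ) 1 →
    b ∈ Set.Icc (0:ℝ) 1 → b' ∈ Set.Icc (0:ℝ) 1 → a ≤ a' → b ≤ b' →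
    mul a b ≤ mul a' b'

/-- `(X, α, *)` is a probabilistic metric space: `α : X × X × [0,∞] → [0,1]`
satisfies (P1)–(P5), where left-continuity on `(0,∞)` is expressed via suprema. -/
structure IsProbMetric {X : Type*} (T : ContinuousTNorm)
    (α : X → X → ℝ≥0∞ → ℝ) : Prop where
  mem : ∀ x y γ, α x y γ ∈ Set.Icc (0:ℝ) 1
  mono : ∀ x y, Monotone (α x y)
  zero : ∀ x y, α x y 0 = 0
  top : ∀ x y, α x y ⊤ = 1
  left_cont : ∀ x y (γ : ℝ≥0∞), 0 < γ → γ ≠ ⊤ →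
    α x y γ = sSup (α x y '' Set.Iio γ)
  refl : ∀ x (γ : ℝ≥0∞), 0 < γ → α x x γ = 1
  symm : ∀ x y γ, α x y γ = α y x γ
  sep : ∀ x y, (∀ γ : ℝ≥0∞, 0 < γ → α x y γ = 1) → x = y
  triangle : ∀ x y z (r s : ℝ≥0∞), T.mul (α y z r) (α x y s) ≤ α x z (r + s)

/-- `φ_{λ,x}(y) = inf {γ ∈ [0,∞) | α(x,y,γ) > 1 - λ}`, with `inf ∅ = ∞`. -/
noncomputable def phi {X : Type*} (α : X → X → ℝ≥0∞ → ℝ) (l : ℝ) (x y : X) : ℝ≥0∞ :=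
  sInf {γ : ℝ≥0∞ | γ ≠ ⊤ ∧ 1 - l < α x y γ}

section

variable {X : Type*} {T : ContinuousTNorm} {α : X → X → ℝ≥0∞ → ℝ}

lemma phi_le {l : ℝ} {x y : X} {γ : ℝ≥0∞} (hγ : γ ≠ ⊤) (h : 1 - l < α x y γ) :
    phi α l x y ≤ γ :=
  sInf_le ⟨hγ, h⟩

lemma le_phi_add_phi {a : ℝ≥0∞} {l : ℝ} {x y z : X}
    (h : ∀ u v, u ≠ ⊤ → v ≠ ⊤ → 1 - l < α x y u → 1 - l < α y z v → a ≤ u + v) :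
    a ≤ phi α l x y + phi α l y z := by
  rw [phi, phi, sInf_eq_iInf', sInf_eq_iInf']
  exact ENNReal.le_iInf_add_iInf fun ⟨u, hu, hxy⟩ ⟨v, hv, hyz⟩ => h u v hu hv hxy hyz

lemma IsProbMetric.mul_le_apply_add (hα : IsProbMetric T α) {a b : ℝ}
    (hb : b ∈ Set.Icc (0:ℝ) 1) (ha : a ∈ Set.Icc (0:ℝ) 1) {x y z : X} {r s : ℝ≥0∞}
    (hbr : b ≤ α y z r) (has : a ≤ α x y s) :
    T.mul b a ≤ α x z (r + s) :=
  (T.mul_mono _ _ _ _ hb (hα.mem y z r) ha (hα.mem x y s) hbr has).trans (hα.triangle x y z r s)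

end

theorem stmt2_general {X : Type*} (T : ContinuousTNorm) (α : X → X → ℝ≥0∞ → ℝ)
    (hα : IsProbMetric T α) (ε l : ℝ)
    (hl0 : 0 < l) (hl1 : l ≤ 1) (h : 1 - ε < T.mul (1 - l) (1 - l))
    (x y z : X) :
    phi α ε x z ≤ phi α l x y + phi α l y z := by
  have hl : 1 - l ∈ Set.Icc (0:ℝ) 1 := ⟨by linarith, by linarith⟩
  refine le_phi_add_phi fun u v hu hv hxy hyz => phi_le (ENNReal.add_ne_top.2 ⟨hu, hv⟩) ?_
  calc 1 - ε < T.mul (1 - l) (1 - l) := h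
    _ ≤ α x z (v + u) := hα.mul_le_apply_add hl hl hyz.le hxy.le
    _ = α x z (u + v) := by rw [add_comm]

/-- If `ε, λ ∈ (0,1]` satisfy `(1-λ)*(1-λ) > 1-ε`, then
`φ_{ε,x}(z) ≤ φ_{λ,x}(y) + φ_{λ,y}(z)`. -/
theorem stmt2 {X : Type*} (T : ContinuousTNorm) (α : X → X → ℝ≥0∞ → ℝ)
    (hα : IsProbMetric T α) (ε l : ℝ) (hε0 : 0 < ε) (hε1 : ε ≤ 1)
    (hl0 : 0 < l) (hl1 : l ≤ 1) (h : 1 - ε < T.mul (1 - l) (1 - l))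
    (x y z : X) :
    phi α ε x z ≤ phi α l x y + phi α l y z :=
  stmt2_general T α hα ε l hl0 hl1 h x y z
end
end

section
/- Let X be a set and let φ_{λ,x} : X → [0,∞] be a family of functions indexed by λ ∈ (0,1] and x ∈ X satisfying the density condition (LD): for every λ ∈ (0,1] and all x,y, φ_{λ,x}(y) = inf{φ_{ρ,x}(y) : 0 < ρ < λ}. Define β : X × X × [0,∞] → [0,1] by β(x,y,∞)=1 and, for γ < ∞, β(x,y,γ) = sup{1−λ : λ ∈ (0,1], φ_{λ,x}(y) < γ} (with sup ∅ = 0). Then for all x,y ∈ X: β(x,y,0) = 0, β(x,y,·) is nondecreasing on [0,∞], and β(x,y,·) is left-continuous on (0,∞), i.e. β(x,y,γ) = sup{β(x,y,s) : s < γ} for every 0 < γ < ∞; in other words β(x,y,·) is a distance distribution. -/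
/-!
Since `φ_{λ,x}(y) < γ` holds iff `φ_{λ,x}(y) < s` for some `s < γ`, the set whose supremum
defines `β(x,y,γ)` is the increasing union of the sets defining `β(x,y,s)` for `s < γ`;
a supremum of an increasing union is the supremum of the partial suprema, which is
left-continuity.
-/

open scoped ENNReal

noncomputable section

/-- `β(x,y,γ) = sup {1 - λ | λ ∈ (0,1], φ_{λ,x}(y) < γ}` (intended for `γ < ∞`),
with `sup ∅ = 0` (the junk value of `Real.sSup`). -/
noncomputable def betaFin {X : Type*} (φ : ℝ → X → X → ℝ≥0∞) (x y : X) (γ : ℝ≥0∞) : ℝ :=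
  sSup {t : ℝ | ∃ l : ℝ, 0 < l ∧ l ≤ 1 ∧ φ l x y < γ ∧ t = 1 - l}

/-- `β : X × X × [0,∞] → [0,1]` with `β(x,y,∞) = 1` and, for `γ < ∞`,
`β(x,y,γ) = sup {1 - λ | λ ∈ (0,1], φ_{λ,x}(y) < γ}` (with `sup ∅ = 0`). -/
noncomputable def betaE {X : Type*} (φ : ℝ → X → X → ℝ≥0∞) (x y : X) (γ : ℝ≥0∞) : ℝ :=
  if γ = ⊤ then 1 else betaFin φ x y γ

section

variable {X : Type*} (φ : ℝ → X → X → ℝ≥0∞) (x y : X)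

lemma bddAbove_betaFin_set (γ : ℝ≥0∞) :
    BddAbove {t : ℝ | ∃ l : ℝ, 0 < l ∧ l ≤ 1 ∧ φ l x y < γ ∧ t = 1 - l} := by
  refine ⟨1, ?_⟩
  rintro t ⟨l, hl0, -, -, rfl⟩
  linarith

lemma le_betaFin {γ : ℝ≥0∞} {l : ℝ} (hl0 : 0 < l) (hl1 : l ≤ 1) (hlγ : φ l x y < γ) :
    1 - l ≤ betaFin φ x y γ :=
  le_csSup (bddAbove_betaFin_set φ x y γ) ⟨l, hl0, hl1, hlγ, rfl⟩

lemma betaFin_nonneg (γ : ℝ≥0∞) : 0 ≤ betaFin φ x y γ := by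
  apply Real.sSup_nonneg
  rintro t ⟨l, -, hl1, -, rfl⟩
  linarith

lemma betaFin_le_one (γ : ℝ≥0∞) : betaFin φ x y γ ≤ 1 := by
  apply Real.sSup_le _ zero_le_one
  rintro t ⟨l, hl0, -, -, rfl⟩
  linarith

lemma betaFin_zero : betaFin φ x y 0 = 0 := by
  simp [betaFin]

lemma betaFin_mono : Monotone (betaFin φ x y) := by
  intro γ γ' hγ
  apply Real.sSup_le _ (betaFin_nonneg φ x y γ')
  rintro t ⟨l, hl0, hl1, hlγ, rfl⟩
  exact le_betaFin φ x y hl0 hl1 (hlγ.trans_le hγ)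

lemma betaFin_eq_sSup_image_Iio {γ : ℝ≥0∞} (hγ : 0 < γ) :
    betaFin φ x y γ = sSup (betaFin φ x y '' Set.Iio γ) := by
  have hbdd : BddAbove (betaFin φ x y '' Set.Iio γ) := by
    refine ⟨1, ?_⟩
    rintro _ ⟨s, -, rfl⟩
    exact betaFin_le_one φ x y s
  apply le_antisymm
  · apply Real.sSup_le _ (Real.sSup_nonneg ?_)
    · rintro t ⟨l, hl0, hl1, hlγ, rfl⟩
      obtain ⟨s, hls, hsγ⟩ := exists_between hlγ
      exact (le_betaFin φ x y hl0 hl1 hls).trans (le_csSup hbdd ⟨s, hsγ, rfl⟩)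
    · rintro _ ⟨s, -, rfl⟩
      exact betaFin_nonneg φ x y s
  · refine csSup_le ⟨betaFin φ x y 0, 0, hγ, rfl⟩ ?_
    rintro _ ⟨s, hs, rfl⟩
    exact betaFin_mono φ x y hs.le

lemma betaE_of_ne_top {γ : ℝ≥0∞} (hγ : γ ≠ ⊤) : betaE φ x y γ = betaFin φ x y γ :=
  if_neg hγ

lemma betaE_top : betaE φ x y ⊤ = 1 :=
  if_pos rfl

lemma betaE_zero : betaE φ x y 0 = 0 := by
  rw [betaE_of_ne_top φ x y ENNReal.zero_ne_top, betaFin_zero]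

lemma betaE_mono : Monotone (betaE φ x y) := by
  intro γ γ' hγ
  rcases eq_or_ne γ' ⊤ with rfl | hγ'
  · rw [betaE_top]
    rcases eq_or_ne γ ⊤ with rfl | hγtop
    · rw [betaE_top]
    · rw [betaE_of_ne_top φ x y hγtop]
      exact betaFin_le_one φ x y γ
  · rw [betaE_of_ne_top φ x y hγ', betaE_of_ne_top φ x y (ne_top_of_le_ne_top hγ' hγ)]
    exact betaFin_mono φ x y hγ

lemma betaE_eq_sSup_image_Iio {γ : ℝ≥0∞} (hγ0 : 0 < γ) (hγ : γ ≠ ⊤) :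
    betaE φ x y γ = sSup (betaE φ x y '' Set.Iio γ) := by
  have hEqOn : Set.EqOn (betaE φ x y) (betaFin φ x y) (Set.Iio γ) :=
    fun s hs => betaE_of_ne_top φ x y (ne_top_of_lt hs)
  rw [Set.image_congr hEqOn, betaE_of_ne_top φ x y hγ]
  exact betaFin_eq_sSup_image_Iio φ x y hγ0

end

theorem stmt9_general {X : Type*} (φ : ℝ → X → X → ℝ≥0∞)
    (x y : X) :
    betaE φ x y 0 = 0 ∧ betaE φ x y ⊤ = 1 ∧ Monotone (betaE φ x y) ∧
    (∀ γ : ℝ≥0∞, 0 < γ → γ ≠ ⊤ →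
      betaE φ x y γ = sSup (betaE φ x y '' Set.Iio γ)) :=
  ⟨betaE_zero φ x y, betaE_top φ x y, betaE_mono φ x y,
    fun _ hγ0 hγ => betaE_eq_sSup_image_Iio φ x y hγ0 hγ⟩

/-- If the family `φ` satisfies (LD), then for all `x, y` the map
`β(x,y,·)` is a distance distribution: `β(x,y,0) = 0`, `β(x,y,∞) = 1`,
`β(x,y,·)` is nondecreasing on `[0,∞]` and left-continuous on `(0,∞)`. -/
theorem stmt9 {X : Type*} (φ : ℝ → X → X → ℝ≥0∞)
    (hLD : ∀ l : ℝ, 0 < l → l ≤ 1 → ∀ x y : X,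
      φ l x y = sInf ((fun ρ => φ ρ x y) '' Set.Ioo (0:ℝ) l))
    (x y : X) :
    betaE φ x y 0 = 0 ∧ betaE φ x y ⊤ = 1 ∧ Monotone (betaE φ x y) ∧
    (∀ γ : ℝ≥0∞, 0 < γ → γ ≠ ⊤ →
      betaE φ x y γ = sSup (betaE φ x y '' Set.Iio γ)) :=
  stmt9_general φ x y
end
end

section
/- Let * be a continuous t-norm on [0,1]. Let X be a set and let φ_{λ,x} : X → [0,∞] be a family of functions indexed by λ ∈ (0,1] and x ∈ X satisfying: (LD) for every λ ∈ (0,1] and all x,y, φ_{λ,x}(y) = inf{φ_{ρ,x}(y) : 0 < ρ < λ}; and (LT) for all ε,λ,λ' ∈ (0,1] with (1−λ')*(1−λ) > 1−ε and all x,y,z ∈ X, φ_{ε,x}(z) ≤ φ_{λ,x}(y) + φ_{λ',y}(z). Define β : X × X × [0,∞] → [0,1] by β(x,y,∞)=1 and, for γ < ∞, β(x,y,γ) = sup{1−λ : λ ∈ (0,1], φ_{λ,x}(y) < γ} (with sup ∅ = 0). Then for all x,y,z ∈ X and all γ,γ' ∈ [0,∞]: β(y,z,γ')*β(x,y,γ)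 ≤ β(x,z,γ+γ'). -/
/-!
For `1 - λ` and `1 - λ'` witnessing `β(x,y,γ)` and `β(y,z,γ')`, every `c < (1-λ')*(1-λ)` yields,
by (LT) with `ε = 1 - c`, the bound `φ_{1-c,x}(z) ≤ φ_{λ,x}(y) + φ_{λ',y}(z) < γ + γ'`, so `c ≤ β(x,z,γ+γ')`.
Hence `(1-λ')*(1-λ) ≤ β(x,z,γ+γ')`, and passing to the suprema uses the continuity of `*`
(or `a * 0 = 0` when a supremum is the junk value `sSup ∅ = 0`).
-/

open scoped ENNReal

noncomputable section

theorem ContinuousOn.apply_csSup_csSup_le {α β γ : Type*}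
    [ConditionallyCompleteLinearOrder α] [TopologicalSpace α] [OrderTopology α]
    [ConditionallyCompleteLinearOrder β] [TopologicalSpace β] [OrderTopology β]
    [TopologicalSpace γ] [Preorder γ] [OrderClosedTopology γ]
    {f : α × β → γ} {s A : Set α} {t B : Set β} {c : γ} (hf : ContinuousOn f (s ×ˢ t))
    (hA : A.Nonempty) (hA_bdd : BddAbove A) (hB : B.Nonempty) (hB_bdd : BddAbove B)
    (hAs : A ⊆ s) (hBt : B ⊆ t) (hsup : (sSup A, sSup B) ∈ s ×ˢ t)
    (h : ∀ a ∈ A, ∀ b ∈ B, f (a, b) ≤ c) : f (sSup A, sSup B) ≤ c := by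
  have hmem : (sSup A, sSup B) ∈ closure (A ×ˢ B) := by
    rw [closure_prod_eq]
    exact ⟨csSup_mem_closure hA hA_bdd, csSup_mem_closure hB hB_bdd⟩
  exact ContinuousWithinAt.closure_le hmem
    ((hf _ hsup).mono (Set.prod_mono hAs hBt)) continuousWithinAt_const
    (fun p hp => h p.1 hp.1 p.2 hp.2)

namespace ContinuousTNorm

variable (T : ContinuousTNorm)

theorem mul_zero {a : ℝ} (ha : a ∈ Set.Icc (0:ℝ) 1) : T.mul a 0 = 0 := by
  have h0 : (0:ℝ) ∈ Set.Icc (0:ℝ) 1 := ⟨le_rfl, zero_le_one⟩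
  have h1 : (1:ℝ) ∈ Set.Icc (0:ℝ) 1 := ⟨zero_le_one, le_rfl⟩
  have hle : T.mul a 0 ≤ T.mul 1 0 := T.mul_mono a 1 0 0 ha h1 h0 h0 ha.2 le_rfl
  rw [T.mul_comm 1 0 h1 h0, T.mul_one 0 h0] at hle
  exact le_antisymm hle (T.mem_mul a 0 ha h0).1

theorem zero_mul {a : ℝ} (ha : a ∈ Set.Icc (0:ℝ) 1) : T.mul 0 a = 0 := by
  rw [T.mul_comm 0 a ⟨le_rfl, zero_le_one⟩ ha, T.mul_zero ha]

end ContinuousTNorm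

section Beta

variable {X : Type*} (φ : ℝ → X → X → ℝ≥0∞)

def betaSet (x y : X) (γ : ℝ≥0∞) : Set ℝ :=
  {t : ℝ | ∃ l : ℝ, 0 < l ∧ l ≤ 1 ∧ φ l x y < γ ∧ t = 1 - l}

theorem betaFin_eq_sSup_betaSet (x y : X) (γ : ℝ≥0∞) :
    betaFin φ x y γ = sSup (betaSet φ x y γ) := rfl

theorem betaSet_subset_Icc (x y : X) (γ : ℝ≥0∞) : betaSet φ x y γ ⊆ Set.Icc 0 1 := by
  rintro t ⟨l, hl0, hl1, -, rfl⟩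
  constructor <;> linarith

theorem bddAbove_betaSet (x y : X) (γ : ℝ≥0∞) : BddAbove (betaSet φ x y γ) :=
  ⟨1, fun _ ht => (betaSet_subset_Icc φ x y γ ht).2⟩

theorem betaFin_mem_Icc (x y : X) (γ : ℝ≥0∞) : betaFin φ x y γ ∈ Set.Icc (0:ℝ) 1 :=
  ⟨Real.sSup_nonneg fun _ ht => (betaSet_subset_Icc φ x y γ ht).1,
    Real.sSup_le (fun _ ht => (betaSet_subset_Icc φ x y γ ht).2) zero_le_one⟩

theorem betaE_mem_Icc (x y : X) (γ : ℝ≥0∞) : betaE φ x y γ ∈ Set.Icc (0:ℝ) 1 := by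
  unfold betaE
  split
  · exact ⟨zero_le_one, le_rfl⟩
  · exact betaFin_mem_Icc φ x y γ

variable {φ} (T : ContinuousTNorm)
  (hLT : ∀ ε l l' : ℝ, 0 < ε → ε ≤ 1 → 0 < l → l ≤ 1 → 0 < l' → l' ≤ 1 →
    1 - ε < T.mul (1 - l') (1 - l) →
    ∀ x y z : X, φ ε x z ≤ φ l x y + φ l' y z)
include hLT

theorem mul_le_betaFin_of_mem_betaSet {x y z : X} {γ γ' : ℝ≥0∞} {a b : ℝ}
    (ha : a ∈ betaSet φ x y γ) (hb : b ∈ betaSet φ y z γ') :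
    T.mul b a ≤ betaFin φ x z (γ + γ') := by
  obtain ⟨l, hl0, hl1, hφl, rfl⟩ := ha
  obtain ⟨l', hl'0, hl'1, hφl', rfl⟩ := hb
  refine le_of_forall_lt_imp_le_of_dense fun c hc => ?_
  rcases lt_or_ge c 0 with hc0 | hc0
  · exact hc0.le.trans (betaFin_mem_Icc φ x z _).1
  have hc1 : c < 1 := hc.trans_le
    (T.mem_mul _ _ ⟨by linarith, by linarith⟩ ⟨by linarith, by linarith⟩).2
  have hφ : φ (1 - c) x z < γ + γ' :=
    (hLT (1 - c) l l' (by linarith) (by linarith) hl0 hl1 hl'0 hl'1 (by rwa [sub_sub_cancel])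
      x y z).trans_lt (ENNReal.add_lt_add hφl hφl')
  exact le_csSup (bddAbove_betaSet φ x z _) ⟨1 - c, by linarith, by linarith, hφ, by ring⟩

theorem mul_betaFin_le_betaFin_add (x y z : X) (γ γ' : ℝ≥0∞) :
    T.mul (betaFin φ y z γ') (betaFin φ x y γ) ≤ betaFin φ x z (γ + γ') := by
  have hmem := betaFin_mem_Icc φ x y γ
  have hmem' := betaFin_mem_Icc φ y z γ'
  rcases (betaSet φ x y γ).eq_empty_or_nonempty with hA | hA
  · rw [betaFin_eq_sSup_betaSet φ x y, hA, Real.sSup_empty, T.mul_zero hmem']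
    exact (betaFin_mem_Icc φ x z _).1
  rcases (betaSet φ y z γ').eq_empty_or_nonempty with hB | hB
  · rw [betaFin_eq_sSup_betaSet φ y z, hB, Real.sSup_empty, T.zero_mul hmem]
    exact (betaFin_mem_Icc φ x z _).1
  exact T.continuousOn.apply_csSup_csSup_le hB (bddAbove_betaSet φ y z γ') hA
    (bddAbove_betaSet φ x y γ) (betaSet_subset_Icc φ y z γ') (betaSet_subset_Icc φ x y γ)
    ⟨hmem', hmem⟩ fun _ hb _ ha => mul_le_betaFin_of_mem_betaSet T hLT ha hb

end Beta

theorem stmt10_general {X : Type*} (T : ContinuousTNorm) (φ : ℝ → X → X → ℝ≥0∞)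
    (hLT : ∀ ε l l' : ℝ, 0 < ε → ε ≤ 1 → 0 < l → l ≤ 1 → 0 < l' → l' ≤ 1 →
      1 - ε < T.mul (1 - l') (1 - l) →
      ∀ x y z : X, φ ε x z ≤ φ l x y + φ l' y z)
    (x y z : X) (γ γ' : ℝ≥0∞) :
    T.mul (betaE φ y z γ') (betaE φ x y γ) ≤ betaE φ x z (γ + γ') := by
  by_cases hsum : γ + γ' = ⊤
  · rw [show betaE φ x z (γ + γ') = 1 from if_pos hsum]
    exact (T.mem_mul _ _ (betaE_mem_Icc φ y z γ') (betaE_mem_Icc φ x y γ)).2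
  obtain ⟨hγ, hγ'⟩ := ENNReal.add_ne_top.1 hsum
  simp only [betaE, if_neg hγ, if_neg hγ', if_neg hsum]
  exact mul_betaFin_le_betaFin_add T hLT x y z γ γ'

/-- If the family `φ` satisfies (LD) and (LT) for a continuous
t-norm `*`, then for all `x, y, z` and all `γ, γ' ∈ [0,∞]`:
`β(y,z,γ') * β(x,y,γ) ≤ β(x,z,γ+γ')`. -/
theorem stmt10 {X : Type*} (T : ContinuousTNorm) (φ : ℝ → X → X → ℝ≥0∞)
    (hLD : ∀ l : ℝ, 0 < l → l ≤ 1 → ∀ x y : X,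
      φ l x y = sInf ((fun ρ => φ ρ x y) '' Set.Ioo (0:ℝ) l))
    (hLT : ∀ ε l l' : ℝ, 0 < ε → ε ≤ 1 → 0 < l → l ≤ 1 → 0 < l' → l' ≤ 1 →
      1 - ε < T.mul (1 - l') (1 - l) →
      ∀ x y z : X, φ ε x z ≤ φ l x y + φ l' y z)
    (x y z : X) (γ γ' : ℝ≥0∞) :
    T.mul (betaE φ y z γ') (betaE φ x y γ) ≤ betaE φ x z (γ + γ') :=
  stmt10_general T φ hLT x y z γ γ'
end
end

section
/- Let X be a set and let φ_{λ,x} : X → [0,∞] be a family of functions indexed by λ ∈ (0,1] and x ∈ X satisfying: (LD) for every λ ∈ (0,1] and all x,y, φ_{λ,x}(y) = inf{φ_{ρ,x}(y) : 0 < ρ < λ}; and (LH) if x ≠ y then there exists λ ∈ (0,1] with φ_{λ,x}(y) > 0. Define β(x,y,γ) = sup{1−λ : λ ∈ (0,1], φ_{λ,x}(y) < γ} for γ < ∞ (with sup ∅ = 0). Then for all x,y ∈ X: if β(x,y,γ) = 1 for all γ ∈ (0,∞), then x = y. -/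
/-!
By (LD), `λ ↦ φ_{λ,x}(y)` is antitone on `(0,1]`. Hence if `φ_{λ₀,x}(y) > 0`, every admissible
`λ` with `φ_{λ,x}(y) < γ := min (φ_{λ₀,x}(y)) 1` satisfies `λ₀ ≤ λ`, so `β(x,y,γ) ≤ 1 - λ₀ < 1`.
-/

open scoped ENNReal

noncomputable section

theorem le_of_eq_sInf_image_Ioo {α : Type*} [CompleteLattice α] {f : ℝ → α} {l ρ : ℝ}
    (hf : f l = sInf (f '' Set.Ioo 0 l)) (hρ : ρ ∈ Set.Ioo 0 l) : f l ≤ f ρ :=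
  hf ▸ sInf_le ⟨ρ, hρ, rfl⟩

theorem betaFin_le_of_forall_le {X : Type*} {φ : ℝ → X → X → ℝ≥0∞} {x y : X} {γ : ℝ≥0∞}
    {l₀ : ℝ} (hl₀ : l₀ ≤ 1) (h : ∀ l, 0 < l → l ≤ 1 → φ l x y < γ → l₀ ≤ l) :
    betaFin φ x y γ ≤ 1 - l₀ := by
  refine Real.sSup_le ?_ (by linarith)
  rintro t ⟨l, hl, hl1, hlt, rfl⟩
  linarith [h l hl hl1 hlt]

theorem betaFin_le_of_le_apply {X : Type*} {φ : ℝ → X → X → ℝ≥0∞} {x y : X} {γ : ℝ≥0∞}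
    {l₀ : ℝ} (hLD : φ l₀ x y = sInf ((fun ρ => φ ρ x y) '' Set.Ioo 0 l₀)) (hl₀1 : l₀ ≤ 1)
    (hγ : γ ≤ φ l₀ x y) : betaFin φ x y γ ≤ 1 - l₀ := by
  refine betaFin_le_of_forall_le hl₀1 fun l hl _ hlt => ?_
  by_contra! hll₀
  exact (hγ.trans (le_of_eq_sInf_image_Ioo (f := fun ρ => φ ρ x y) hLD ⟨hl, hll₀⟩)).not_gt hlt

/-- If the family `φ` satisfies (LD) and (LH), then for all
`x, y`: if `β(x,y,γ) = 1` for all `γ ∈ (0,∞)`, then `x = y`. -/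
theorem stmt11 {X : Type*} (φ : ℝ → X → X → ℝ≥0∞)
    (hLD : ∀ l : ℝ, 0 < l → l ≤ 1 → ∀ x y : X,
      φ l x y = sInf ((fun ρ => φ ρ x y) '' Set.Ioo (0:ℝ) l))
    (hLH : ∀ x y : X, x ≠ y → ∃ l : ℝ, 0 < l ∧ l ≤ 1 ∧ 0 < φ l x y)
    (x y : X) (h : ∀ γ : ℝ≥0∞, 0 < γ → γ ≠ ⊤ → betaFin φ x y γ = 1) :
    x = y := by
  by_contra hxy
  obtain ⟨l₀, hl₀, hl₀1, hpos⟩ := hLH x y hxy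
  have hβ : betaFin φ x y (min (φ l₀ x y) 1) ≤ 1 - l₀ :=
    betaFin_le_of_le_apply (hLD l₀ hl₀ hl₀1 x y) hl₀1 (min_le_left _ _)
  rw [h _ (lt_min hpos one_pos) (min_lt_of_right_lt ENNReal.one_lt_top).ne] at hβ
  linarith
end
end

section
/- Let (X,α,*) be a probabilistic metric space and define d_λ(x,y) = inf{γ ∈ [0,∞) : α(x,y,γ) > 1−λ} (with inf ∅ = ∞) for λ ∈ (0,1]. Define β : X × X × [0,∞] → [0,1] by β(x,y,∞)=1 and, for γ < ∞, β(x,y,γ) = sup{1−λ : λ ∈ (0,1], d_λ(x,y) < γ} (with sup ∅ = 0). Then β = α, i.e. β(x,y,γ) = α(x,y,γ) for all x,y ∈ X and all γ ∈ [0,∞]. -/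
open scoped ENNReal

noncomputable section

/-! For finite `γ`, the levels `1 - λ` with `d_λ(x,y) < γ` are exactly the points of
`[0, α(x,y,γ))`: a level below `α(x,y,γ)` is already exceeded by some `α(x,y,γ')` with
`γ' < γ` by left-continuity, and conversely `d_λ(x,y) < γ` forces `1 - λ < α(x,y,γ)` by
monotonicity. The supremum of `[0, a)` is `a`, also for `a = 0` thanks to `sup ∅ = 0`. -/

open Set

theorem Real.sSup_Ico_zero {a : ℝ} (ha : 0 ≤ a) : sSup (Ico 0 a) = a := by
  rcases ha.eq_or_lt with rfl | ha
  · rw [Ico_self, Real.sSup_empty]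
  · exact csSup_Ico ha

section

variable {X : Type*} {T : ContinuousTNorm} {α : X → X → ℝ≥0∞ → ℝ}

theorem IsProbMetric.setOf_phi_lt_eq_Ico (hα : IsProbMetric T α) (x y : X) {γ : ℝ≥0∞}
    (hγ : γ ≠ ⊤) :
    {t : ℝ | ∃ l : ℝ, 0 < l ∧ l ≤ 1 ∧ phi α l x y < γ ∧ t = 1 - l} = Ico 0 (α x y γ) := by
  ext t
  constructor
  · rintro ⟨l, -, hl1, hφ, rfl⟩
    obtain ⟨γ', ⟨-, hlt⟩, hγ'γ⟩ := sInf_lt_iff.mp hφ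
    exact ⟨by linarith, hlt.trans_le (hα.mono x y hγ'γ.le)⟩
  · rintro ⟨ht0, htα⟩
    have hγ0 : 0 < γ := by
      refine pos_iff_ne_zero.mpr fun h0 => ?_
      rw [h0, hα.zero] at htα
      linarith
    rw [hα.left_cont x y γ hγ0 hγ] at htα
    obtain ⟨-, ⟨γ', hγ'γ, rfl⟩, htγ'⟩ :=
      exists_lt_of_lt_csSup (Set.Nonempty.image _ ⟨0, hγ0⟩) htα
    have ht1 : t < 1 := htγ'.trans_le (hα.mem x y γ').2
    refine ⟨1 - t, by linarith, by linarith, ?_, by ring⟩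
    calc phi α (1 - t) x y ≤ γ' := sInf_le ⟨ne_top_of_lt (mem_Iio.mp hγ'γ), by linarith⟩
      _ < γ := hγ'γ

theorem IsProbMetric.betaFin_phi_eq (hα : IsProbMetric T α) (x y : X) {γ : ℝ≥0∞}
    (hγ : γ ≠ ⊤) : betaFin (phi α) x y γ = α x y γ := by
  rw [betaFin, hα.setOf_phi_lt_eq_Ico x y hγ, Real.sSup_Ico_zero (hα.mem x y γ).1]

end

/-- Reconstructing `β` from the distances `d_λ = φ_{λ,·}(·)`
associated with a probabilistic metric space `(X, α, *)` gives back `α`. -/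
theorem stmt14 {X : Type*} (T : ContinuousTNorm) (α : X → X → ℝ≥0∞ → ℝ)
    (hα : IsProbMetric T α) (x y : X) (γ : ℝ≥0∞) :
    betaE (phi α) x y γ = α x y γ := by
  by_cases hγ : γ = ⊤
  · rw [betaE, if_pos hγ, hγ, hα.top]
  · rw [betaE, if_neg hγ, hα.betaFin_phi_eq x y hγ]
end
end

section
/- Let (X,α,*) and (Y,α',*') be probabilistic metric spaces, and define d_λ(x,x') = inf{γ ∈ [0,∞) : α(x,x',γ) > 1−λ} and d'_λ(y,y') = inf{γ ∈ [0,∞) : α'(y,y',γ) > 1−λ} (with inf ∅ = ∞) for λ ∈ (0,1]. Then a map f : X → Y is non-expansive, i.e. α(x,x',t) ≤ α'(f(x),f(x'),t) for all x,x' ∈ X and t ∈ [0,∞], if and only if for every λ ∈ (0,1] and all x,x' ∈ X: d'_λ(f(x),f(x')) ≤ d_λ(x,x'). -/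
open scoped ENNReal

noncomputable section

/-!
Non-expansiveness trivially implies the levelwise inequalities, since `φ_λ` is antitone in
`α`. Conversely, by monotonicity and left-continuity of `α(x,x',·)`, for `0 < t < ∞` one has
`φ_λ(x,x') < t ↔ 1 - λ < α(x,x',t)`. If `α'(f x, f x', t) < α(x,x',t)`, choosing `1 - λ`
strictly between these two values gives `φ'_λ(f x, f x') ≤ φ_λ(x,x') < t ≤ φ'_λ(f x, f x')`.
-/

lemma phi_le_phi_of_le {X Y : Type*} {α : X → X → ℝ≥0∞ → ℝ} {β : Y → Y → ℝ≥0∞ → ℝ}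
    (l : ℝ) {x x' : X} {y y' : Y} (h : ∀ t, α x x' t ≤ β y y' t) :
    phi β l y y' ≤ phi α l x x' :=
  sInf_le_sInf fun _ ⟨hγ, hlt⟩ => ⟨hγ, hlt.trans_le (h _)⟩

namespace IsProbMetric

variable {X : Type*} {T : ContinuousTNorm} {α : X → X → ℝ≥0∞ → ℝ}

lemma phi_lt_iff (hα : IsProbMetric T α) (l : ℝ) (x x' : X) {t : ℝ≥0∞} (ht : 0 < t)
    (ht' : t ≠ ⊤) : phi α l x x' < t ↔ 1 - l < α x x' t := by
  constructor
  · intro h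
    obtain ⟨s, ⟨-, hs⟩, hst⟩ := sInf_lt_iff.1 h
    exact hs.trans_le (hα.mono x x' hst.le)
  · intro h
    rw [hα.left_cont x x' t ht ht'] at h
    obtain ⟨_, ⟨s, hst : s < t, rfl⟩, hs⟩ :=
      exists_lt_of_lt_csSup (Set.Nonempty.image _ ⟨0, ht⟩) h
    exact (show phi α l x x' ≤ s from sInf_le ⟨hst.ne_top, hs⟩).trans_lt hst

lemma apply_le_apply_of_forall_phi_le {Y : Type*} {T' : ContinuousTNorm}
    {β : Y → Y → ℝ≥0∞ → ℝ} (hα : IsProbMetric T α) (hβ : IsProbMetric T' β) {x x' : X}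
    {y y' : Y} (h : ∀ l : ℝ, 0 < l → l ≤ 1 → phi β l y y' ≤ phi α l x x') (t : ℝ≥0∞) :
    α x x' t ≤ β y y' t := by
  by_contra! hlt
  have hβ0 := (hβ.mem y y' t).1
  have hα1 := (hα.mem x x' t).2
  have ht : 0 < t := pos_iff_ne_zero.2 fun h0 => by
    subst h0
    linarith [hα.zero x x']
  have ht' : t ≠ ⊤ := fun htop => by
    subst htop
    linarith [hβ.top y y']
  set l : ℝ := 1 - (α x x' t + β y y' t) / 2 with hl
  have hphi := (h l (by linarith) (by linarith)).trans_lt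
    ((hα.phi_lt_iff l x x' ht ht').2 (by linarith))
  linarith [(hβ.phi_lt_iff l y y' ht ht').1 hphi, hl]

end IsProbMetric

/-- A map `f : X → Y` between probabilistic metric spaces is
non-expansive iff it is levelwise non-expansive for the associated distances. -/
theorem stmt15 {X Y : Type*} (T T' : ContinuousTNorm)
    (α : X → X → ℝ≥0∞ → ℝ) (α' : Y → Y → ℝ≥0∞ → ℝ)
    (hα : IsProbMetric T α) (hα' : IsProbMetric T' α') (f : X → Y) :
    (∀ (x x' : X) (t : ℝ≥0∞), α x x' t ≤ α' (f x) (f x') t) ↔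
    (∀ l : ℝ, 0 < l → l ≤ 1 → ∀ x x' : X,
      phi α' l (f x) (f x') ≤ phi α l x x') :=
  ⟨fun h l _ _ x x' => phi_le_phi_of_le l (h x x'),
    fun h x x' => hα.apply_le_apply_of_forall_phi_le hα' fun l hl hl' => h l hl hl' x x'⟩
end
end
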